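/- Let {0} = Λ₀ ⊂ Λ₁ ⊂ ⋯ ⊂ Λ_k = Λ be a filtration of a lattice Λ by pure sublattices, and for 1 ≤ i ≤ k let Q_i = Λ_i/Λ_{i−1} denote the quotient lattice, i.e. the image of Λ_i under the orthogonal projection onto the orthogonal complement of span(Λ_{i−1}). Then μ(Λ)² ≤ Σ_{i=1}^k μ(Q_i)². -/

import Mathlib

open scoped RealInnerProductSpace
open Metric

noncomputable section

variable {E : Type*} [NormedAddCommGroup E] [InnerProductSpace ℝ E] [FiniteDimensional ℝ E]

/-- `L ⊆ E` is a lattice of rank `n`: it is generated (over `ℤ`) by `n`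
`ℝ`-linearly independent vectors. -/
def IsLatticeOfRank (L : Submodule ℤ E) (n : ℕ) : Prop :=
  ∃ b : Fin n → E, LinearIndependent ℝ b ∧ L = Submodule.span ℤ (Set.range b)

/-- The real span of a lattice. -/
def latSpan (L : Submodule ℤ E) : Submodule ℝ E := Submodule.span ℝ (L : Set E)

/-- The covering radius of a lattice, computed inside its real span. -/
def covRad (L : Submodule ℤ E) : ℝ :=
  ⨆ x : latSpan L, infDist (x : E) (L : Set E)

/-- `L'` is a pure sublattice of `L`: the quotient is torsion-free. -/
def IsPureIn (L' L : Submodule ℤ E) : Prop :=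
  L' ≤ L ∧ ∀ v ∈ L, ∀ m : ℤ, m ≠ 0 → m • v ∈ L' → v ∈ L'

/-- Orthogonal projection of `E` onto the orthogonal complement of the span
of `L'`, as a `ℤ`-linear endomorphism of `E`. -/
def projPerp (L' : Submodule ℤ E) : E →ₗ[ℤ] E :=
  ((latSpan L')ᗮ.subtype.comp (Submodule.orthogonalProjection (latSpan L')ᗮ).toLinearMap).restrictScalars ℤ

/-- The quotient lattice `L/L'`, realized as the image of `L` under the
orthogonal projection onto the orthogonal complement of the span of `L'`. -/
def quotLat (L L' : Submodule ℤ E) : Submodule ℤ E := L.map (projPerp L')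

/-! For `L' ≤ L` and `x` in the span of `L`, pick `v ∈ L` whose component orthogonal to the span
of `L'` is within `μ(L/L')` of that of `x`, then `w ∈ L'` within `μ(L')` of the projection of
`x - v` onto the span of `L'`. The two errors are orthogonal, so by Pythagoras
`dist(x, v + w)² ≤ μ(L')² + μ(L/L')²`; induction along the filtration gives the sum. -/

section

variable {F : Type*} [NormedAddCommGroup F]

lemma le_add_infDist_sq_of_forall {X : Type*} [PseudoMetricSpace X] {s : Set X}
    (hs : s.Nonempty) {a c : ℝ} {z : X} (h : ∀ q ∈ s, a ≤ c + dist z q ^ 2) :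
    a ≤ c + infDist z s ^ 2 := by
  by_contra! hlt
  have : infDist z s < √(a - c) :=
    Real.lt_sqrt_of_sq_lt (by linarith)
  obtain ⟨q, hq, hdist⟩ := (infDist_lt_iff hs).1 this
  have := h q hq
  nlinarith [Real.sq_sqrt (show 0 ≤ a - c by nlinarith), dist_nonneg (x := z) (y := q)]

lemma infDist_le_infDist_sub_of_le {L' L : Submodule ℤ F} (hle : L' ≤ L) (x : F) {v : F}
    (hv : v ∈ L) : infDist x L ≤ infDist (x - v) L' :=
  (le_infDist ⟨0, L'.zero_mem⟩).2 fun w hw => by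
    simpa [dist_eq_norm, sub_sub] using infDist_le_dist_of_mem (L.add_mem hv (hle hw))

lemma infDist_le_sum_norm_of_mem_span [NormedSpace ℝ F] {L : Submodule ℤ F} {s : Finset F}
    (hsL : (s : Set F) ⊆ L) {y : F} (hy : y ∈ Submodule.span ℝ (s : Set F)) :
    infDist y L ≤ ∑ v ∈ s, ‖v‖ := by
  obtain ⟨f, -, rfl⟩ := Submodule.mem_span_finset.1 hy
  have hround : ∑ v ∈ s, round (f v) • v ∈ L :=
    L.sum_mem fun v hv => L.smul_mem _ (hsL hv)
  calc infDist (∑ v ∈ s, f v • v) L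
      ≤ ‖∑ v ∈ s, (f v - round (f v)) • v‖ := by
        simpa [dist_eq_norm, sub_smul, ← Int.cast_smul_eq_zsmul ℝ] using
          infDist_le_dist_of_mem hround
    _ ≤ ∑ v ∈ s, ‖v‖ := by
        refine (norm_sum_le _ _).trans (Finset.sum_le_sum fun v _ => ?_)
        rw [norm_smul, Real.norm_eq_abs]
        exact mul_le_of_le_one_left (norm_nonneg v) ((abs_sub_round _).trans (by norm_num))

variable [InnerProductSpace ℝ F]

lemma norm_sub_sq_eq_starProjection {K : Submodule ℝ F} [K.HasOrthogonalProjection] (y : F)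
    {w : F} (hw : w ∈ K) :
    ‖y - w‖ ^ 2 = ‖K.starProjection y - w‖ ^ 2 + ‖y - K.starProjection y‖ ^ 2 := by
  have horth : ⟪K.starProjection y - w, y - K.starProjection y⟫ = 0 :=
    K.inner_right_of_mem_orthogonal (K.sub_mem (K.starProjection_apply_mem y) hw)
      (K.sub_starProjection_mem_orthogonal y)
  rw [sq, sq, sq, ← norm_add_sq_eq_norm_sq_add_norm_sq_real horth, sub_add_sub_cancel']

lemma covRad_nonneg (L : Submodule ℤ F) : 0 ≤ covRad L :=
  Real.iSup_nonneg fun _ => infDist_nonneg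

lemma covRad_sq_le {L : Submodule ℤ F} {r : ℝ} (hr : 0 ≤ r)
    (h : ∀ x ∈ latSpan L, infDist x L ^ 2 ≤ r) : covRad L ^ 2 ≤ r := by
  have : covRad L ≤ √r :=
    Real.iSup_le (fun x => Real.le_sqrt_of_sq_le (h x x.2)) (Real.sqrt_nonneg r)
  simpa [Real.sq_sqrt hr] using pow_le_pow_left₀ (covRad_nonneg L) this 2

lemma covRad_bot : covRad (⊥ : Submodule ℤ F) = 0 := by
  refine le_antisymm ?_ (covRad_nonneg ⊥)
  suffices covRad (⊥ : Submodule ℤ F) ^ 2 ≤ 0 by nlinarith [covRad_nonneg (⊥ : Submodule ℤ F)]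
  refine covRad_sq_le le_rfl fun x hx => ?_
  simp_all [latSpan]

variable [FiniteDimensional ℝ F]

-- The infimum defining `infDist y s` is attained on the closure of `s`, which still lies in `K`.
lemma infDist_sq_le_infDist_starProjection_sq_add (K : Submodule ℝ F) {s : Set F}
    (hs : s.Nonempty) (hsK : s ⊆ K) (y : F) :
    infDist y s ^ 2 ≤ infDist (K.starProjection y) s ^ 2 + ‖y - K.starProjection y‖ ^ 2 := by
  obtain ⟨w, hw, hdist⟩ := exists_mem_closure_infDist_eq_dist hs (K.starProjection y)
  have hwK : w ∈ K := closure_minimal hsK K.closed_of_finiteDimensional hw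
  rw [hdist, dist_eq_norm, ← norm_sub_sq_eq_starProjection y hwK, ← dist_eq_norm,
    ← infDist_closure]
  exact pow_le_pow_left₀ infDist_nonneg (infDist_le_dist_of_mem hw) 2

lemma exists_finset_subset_span_eq_latSpan (L : Submodule ℤ F) :
    ∃ s : Finset F, (s : Set F) ⊆ L ∧ Submodule.span ℝ (s : Set F) = latSpan L := by
  obtain ⟨b, hbL, hspan, hind⟩ := exists_linearIndependent ℝ (L : Set F)
  have : Finite b := hind.finite_of_isNoetherian
  exact ⟨b.toFinite.toFinset, by simpa using hbL, by simpa [latSpan] using hspan⟩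

lemma bddAbove_range_infDist_latSpan (L : Submodule ℤ F) :
    BddAbove (Set.range fun x : latSpan L => infDist (x : F) L) := by
  obtain ⟨s, hsL, hspan⟩ := exists_finset_subset_span_eq_latSpan L
  refine ⟨∑ v ∈ s, ‖v‖, ?_⟩
  rintro _ ⟨x, rfl⟩
  exact infDist_le_sum_norm_of_mem_span hsL (by rw [hspan]; exact x.2)

lemma infDist_le_covRad (L : Submodule ℤ F) {x : F} (hx : x ∈ latSpan L) :
    infDist x L ≤ covRad L :=
  le_ciSup (bddAbove_range_infDist_latSpan L) ⟨x, hx⟩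

lemma projPerp_apply (L' : Submodule ℤ F) (x : F) :
    projPerp L' x = x - (latSpan L').starProjection x :=
  (latSpan L').starProjection_orthogonal_val x

lemma projPerp_mem_latSpan_quotLat {L L' : Submodule ℤ F} {x : F} (hx : x ∈ latSpan L) :
    projPerp L' x ∈ latSpan (quotLat L L') := by
  rw [latSpan] at hx
  have hmap := Submodule.mem_map_of_mem (f := ((latSpan L')ᗮ.starProjection : F →ₗ[ℝ] F)) hx
  rw [Submodule.map_span] at hmap
  refine Submodule.span_mono ?_ hmap
  rintro _ ⟨u, hu, rfl⟩
  exact ⟨u, hu, rfl⟩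

lemma infDist_sq_le_covRad_sq_add_infDist_projPerp_sq {L' L : Submodule ℤ F} (hle : L' ≤ L)
    (x : F) :
    infDist x L ^ 2 ≤ covRad L' ^ 2 + infDist (projPerp L' x) (quotLat L L') ^ 2 := by
  refine le_add_infDist_sq_of_forall ⟨0, (quotLat L L').zero_mem⟩ ?_
  rintro _ ⟨v, hv, rfl⟩
  set K := latSpan L'
  have hproj : K.starProjection (x - v) ∈ K := K.starProjection_apply_mem _
  calc infDist x L ^ 2 ≤ infDist (x - v) L' ^ 2 :=
        pow_le_pow_left₀ infDist_nonneg (infDist_le_infDist_sub_of_le hle x hv) 2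
    _ ≤ infDist (K.starProjection (x - v)) L' ^ 2 + ‖x - v - K.starProjection (x - v)‖ ^ 2 :=
        infDist_sq_le_infDist_starProjection_sq_add K ⟨0, L'.zero_mem⟩ Submodule.subset_span _
    _ ≤ covRad L' ^ 2 + dist (projPerp L' x) (projPerp L' v) ^ 2 := by
        rw [dist_eq_norm, ← map_sub, projPerp_apply]
        gcongr
        · exact infDist_nonneg
        · exact infDist_le_covRad L' hproj

lemma covRad_sq_le_covRad_sq_add_covRad_quotLat_sq {L' L : Submodule ℤ F} (hle : L' ≤ L) :
    covRad L ^ 2 ≤ covRad L' ^ 2 + covRad (quotLat L L') ^ 2 := by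
  refine covRad_sq_le (by positivity) fun x hx => ?_
  refine (infDist_sq_le_covRad_sq_add_infDist_projPerp_sq hle x).trans ?_
  gcongr
  · exact infDist_nonneg
  · exact infDist_le_covRad _ (projPerp_mem_latSpan_quotLat hx)

lemma covRad_sq_le_sum_of_le_succ (Lc : ℕ → Submodule ℤ F) (h0 : Lc 0 = ⊥) :
    ∀ k, (∀ i < k, Lc i ≤ Lc (i + 1)) →
      covRad (Lc k) ^ 2 ≤ ∑ i ∈ Finset.range k, covRad (quotLat (Lc (i + 1)) (Lc i)) ^ 2
  | 0, _ => by simp [h0, covRad_bot]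
  | k + 1, hmono => by
    rw [Finset.sum_range_succ]
    refine (covRad_sq_le_covRad_sq_add_covRad_quotLat_sq (hmono k k.lt_succ_self)).trans ?_
    gcongr
    exact covRad_sq_le_sum_of_le_succ Lc h0 k fun i hi => hmono i (hi.trans k.lt_succ_self)

end

theorem covRad_sq_le_sum_filtration_general
    {E : Type*} [NormedAddCommGroup E] [InnerProductSpace ℝ E] [FiniteDimensional ℝ E]
    (k : ℕ) (L : Submodule ℤ E)
    (Lc : ℕ → Submodule ℤ E)
    (h0 : Lc 0 = ⊥) (hk : Lc k = L)
    (hchain : ∀ i < k, Lc i < Lc (i + 1)) :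
    covRad L ^ 2 ≤ ∑ i ∈ Finset.range k, covRad (quotLat (Lc (i + 1)) (Lc i)) ^ 2 :=
  hk ▸ covRad_sq_le_sum_of_le_succ Lc h0 k fun i hi => (hchain i hi).le

/-- Let {0} = Λ₀ ⊂ Λ₁ ⊂ ⋯ ⊂ Λ_k = Λ be a filtration of a lattice Λ
by pure sublattices, and let Q_i = Λ_i/Λ_{i−1} be the quotient lattices (images
under the orthogonal projections). Then μ(Λ)² ≤ Σ_{i=1}^k μ(Q_i)². -/
theorem covRad_sq_le_sum_filtration
    {E : Type*} [NormedAddCommGroup E] [InnerProductSpace ℝ E] [FiniteDimensional ℝ E]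
    (n k : ℕ) (L : Submodule ℤ E) (hL : IsLatticeOfRank L n)
    (Lc : ℕ → Submodule ℤ E)
    (h0 : Lc 0 = ⊥) (hk : Lc k = L)
    (hchain : ∀ i < k, Lc i < Lc (i + 1))
    (hpure : ∀ i ≤ k, IsPureIn (Lc i) L) :
    covRad L ^ 2 ≤ ∑ i ∈ Finset.range k, covRad (quotLat (Lc (i + 1)) (Lc i)) ^ 2 :=
  covRad_sq_le_sum_filtration_general k L Lc h0 hk hchain

end
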